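/- Let P and Q be finitely presented R-modules and let φ : Q → P be R-linear, inducing a natural transformation φ^* between the functors Hom_R(P, −) and Hom_R(Q, −). Then the pointwise cokernel functor F(S) = coker(Hom_R(P,S) → Hom_R(Q,S)) preserves arbitrary direct products: the canonical map F(∏_i S_i) → ∏_i F(S_i) is bijective for every family (S_i) of R-modules. -/
import Mathlib


open LinearMap

variable (R : Type) [CommRing R]

/-- The pointwise cokernel functor `F(S) = coker (Hom_R(P,S) → Hom_R(Q,S))` induced by
precomposition with `φ : Q → P`. -/
abbrev cokerHomFunctor {P Q : Type} [AddCommGroup P] [AddCommGroup Q] [Module R P] [Module R Q]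
    (φ : Q →ₗ[R] P) (S : Type) [AddCommGroup S] [Module R S] : Type :=
  (Q →ₗ[R] S) ⧸ LinearMap.range (LinearMap.lcomp R S φ)

/-- The canonical map `F(∏ i, S i) → ∏ i, F(S i)` for the pointwise cokernel functor,
induced by postcomposition with the projections. -/
noncomputable def cokerHomFunctorPiMap {P Q : Type} [AddCommGroup P] [AddCommGroup Q]
    [Module R P] [Module R Q] (φ : Q →ₗ[R] P) {I : Type} (S : I → Type)
    [∀ i, AddCommGroup (S i)] [∀ i, Module R (S i)] :
    cokerHomFunctor R φ (∀ i, S i) →ₗ[R] ∀ i, cokerHomFunctor R φ (S i) :=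
  Submodule.liftQ _
    (LinearMap.pi fun i =>
      (Submodule.mkQ _).comp ((LinearMap.llcomp R Q (∀ j, S j) (S i)) (LinearMap.proj i)))
    (by
      rintro x ⟨h, rfl⟩
      rw [LinearMap.mem_ker]
      funext i
      exact (Submodule.Quotient.mk_eq_zero _).2 ⟨(LinearMap.proj i).comp h, rfl⟩)

/-- If `P` and `Q` are finitely presented `R`-modules and `φ : Q → P`, then the pointwise
cokernel functor `S ↦ coker (Hom_R(P,S) → Hom_R(Q,S))` preserves arbitrary direct products:
the canonical map `F(∏ S i) → ∏ F(S i)` is bijective. -/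
theorem stmt19 (P Q : Type) [AddCommGroup P] [AddCommGroup Q] [Module R P] [Module R Q]
    (hP : Module.FinitePresentation R P) (hQ : Module.FinitePresentation R Q)
    (φ : Q →ₗ[R] P) (I : Type) (S : I → Type)
    [∀ i, AddCommGroup (S i)] [∀ i, Module R (S i)] :
    Function.Bijective (cokerHomFunctorPiMap R φ S) := by
  constructor
  · rw [← LinearMap.ker_eq_bot, eq_bot_iff]
    intro x hx
    obtain ⟨f, rfl⟩ := Submodule.Quotient.mk_surjective _ x
    rw [LinearMap.mem_ker] at hx
    have h : ∀ i, ∃ g : P →ₗ[R] S i, g.comp φ = (LinearMap.proj i).comp f := by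
      intro i
      have hi := congrFun hx i
      simp only [cokerHomFunctorPiMap, Submodule.liftQ_apply, LinearMap.pi_apply,
        LinearMap.comp_apply, Submodule.mkQ_apply, Pi.zero_apply] at hi
      obtain ⟨g, hg⟩ := (Submodule.Quotient.mk_eq_zero _).1 hi
      exact ⟨g, hg⟩
    choose g hg using h
    rw [Submodule.mem_bot, Submodule.Quotient.mk_eq_zero]
    refine ⟨LinearMap.pi g, ?_⟩
    ext q i
    simpa using congrFun (congrArg DFunLike.coe (hg i)) q
  · intro x
    choose f hf using fun i => Submodule.Quotient.mk_surjective _ (x i)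
    refine ⟨Submodule.Quotient.mk (LinearMap.pi f), ?_⟩
    funext i
    simp only [cokerHomFunctorPiMap, Submodule.liftQ_apply, LinearMap.pi_apply,
      LinearMap.comp_apply, Submodule.mkQ_apply]
    rw [← hf i]
    congr 1
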